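/- arXiv:2512.21765 — 3 statements merged into one kernel-verified Lean document; each statement's English description precedes it below -/
import Mathlib

section
/- Tropicalization of the Plücker relation: let K be a field with valuation val satisfying val(ab) = val(a)+val(b) and val(a+b) ≤ max(val(a), val(b)) with equality whenever val(a) ≠ val(b). If p_{ij}, p_{kl}, p_{ik}, p_{jl}, p_{il}, p_{jk} are nonzero elements of K satisfying p_{ij}p_{kl} − p_{ik}p_{jl} + p_{il}p_{jk} = 0, then the maximum of the three real numbers val(p_{ij})+val(p_{kl}), val(p_{ik})+val(p_{jl}), val(p_{il})+val(p_{jk}) is attained at least twice. -/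
/-!
Write `a = p_ij p_kl`, `b = p_ik p_jl`, `c = p_il p_jk`, so the relation reads `b = a + c` and the
three sums are `val a`, `val b`, `val c`. The ultrametric inequality `val b ≤ max (val a) (val c)`
together with its equality case when `val a ≠ val c` forces the maximum of the three values to be
attained twice.
-/

theorem max_attained_twice_of_le_max {α : Type*} [LinearOrder α] {x y z : α}
    (hle : y ≤ max x z) (heq : x ≠ z → y = max x z) :
    (x = y ∧ z ≤ x) ∨ (x = z ∧ y ≤ x) ∨ (y = z ∧ x ≤ y) := by
  rcases eq_or_ne x z with rfl | hne
  · exact Or.inr (Or.inl ⟨rfl, by simpa using hle⟩)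
  · rcases le_total x z with hxz | hzx
    · have hy : y = z := by rw [heq hne, max_eq_right hxz]
      exact Or.inr (Or.inr ⟨hy, hy ▸ hxz⟩)
    · have hy : y = x := by rw [heq hne, max_eq_left hzx]
      exact Or.inl ⟨hy.symm, hzx⟩

theorem max_attained_twice_of_ultrametric {M α : Type*} [Add M] [LinearOrder α] (v : M → α)
    (hadd : ∀ a b : M, v (a + b) ≤ max (v a) (v b))
    (hadd_eq : ∀ a b : M, v a ≠ v b → v (a + b) = max (v a) (v b)) (a c : M) :
    (v a = v (a + c) ∧ v c ≤ v a) ∨ (v a = v c ∧ v (a + c) ≤ v a) ∨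
      (v (a + c) = v c ∧ v a ≤ v (a + c)) :=
  max_attained_twice_of_le_max (hadd a c) (hadd_eq a c)

theorem stmt5_general {K : Type*} [Field K] (val : K → WithBot ℝ)
    (hmul : ∀ a b : K, val (a * b) = val a + val b)
    (hadd : ∀ a b : K, val (a + b) ≤ max (val a) (val b))
    (hadd_eq : ∀ a b : K, val a ≠ val b → val (a + b) = max (val a) (val b))
    (pij pkl pik pjl pil pjk : K)
    (hrel : pij * pkl - pik * pjl + pil * pjk = 0) :
    (val pij + val pkl = val pik + val pjl ∧
      val pil + val pjk ≤ val pij + val pkl) ∨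
    (val pij + val pkl = val pil + val pjk ∧
      val pik + val pjl ≤ val pij + val pkl) ∨
    (val pik + val pjl = val pil + val pjk ∧
      val pij + val pkl ≤ val pik + val pjl) := by
  have hb : pik * pjl = pij * pkl + pil * pjk := by linear_combination -hrel
  simp only [← hmul, hb]
  exact max_attained_twice_of_ultrametric val hadd hadd_eq _ _

/-- Tropicalization of the Plücker relation: if six nonzero elements of a valued
field satisfy the three-term Plücker relation, then the maximum among the three
sums of valuations is attained at least twice. -/
theorem stmt5 {K : Type*} [Field K] (val : K → WithBot ℝ)
    (hzero : ∀ a : K, val a = ⊥ ↔ a = 0)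
    (hmul : ∀ a b : K, val (a * b) = val a + val b)
    (hadd : ∀ a b : K, val (a + b) ≤ max (val a) (val b))
    (hadd_eq : ∀ a b : K, val a ≠ val b → val (a + b) = max (val a) (val b))
    (pij pkl pik pjl pil pjk : K)
    (hij : pij ≠ 0) (hkl : pkl ≠ 0) (hik : pik ≠ 0)
    (hjl : pjl ≠ 0) (hil : pil ≠ 0) (hjk : pjk ≠ 0)
    (hrel : pij * pkl - pik * pjl + pil * pjk = 0) :
    (val pij + val pkl = val pik + val pjl ∧
      val pil + val pjk ≤ val pij + val pkl) ∨
    (val pij + val pkl = val pil + val pjk ∧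
      val pik + val pjl ≤ val pij + val pkl) ∨
    (val pik + val pjl = val pil + val pjk ∧
      val pij + val pkl ≤ val pik + val pjl) :=
  stmt5_general val hmul hadd hadd_eq pij pkl pik pjl pil pjk hrel
end

section
/- Tropical line segments between ultrametrics stay in ultrametric space: let u, v : X × X → ℝ be ultrametrics on a finite set X (symmetric, zero on the diagonal, satisfying u(i,k) ≤ max(u(i,j), u(j,k)) and similarly for v). Then for every ℓ ∈ ℝ, the function w(i,j) := max(ℓ + u(i,j), v(i,j)) for i ≠ j (and w(i,i) := 0) satisfies the ultrametric inequality w(i,k) ≤ max(w(i,j), w(j,k)) for all distinct i, j, k. -/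
/-! The tropical segment is built from `u` and `v` by adding a constant and taking a pointwise
maximum; both operations preserve the ultrametric inequality because they are monotone and
commute with `max`. -/

section UltrametricIneq

variable {X α : Type*} [LinearOrder α]

def UltrametricIneq (u : X → X → α) : Prop :=
  ∀ i j k, u i k ≤ max (u i j) (u j k)

theorem UltrametricIneq.const_add [Add α] [AddLeftMono α] {u : X → X → α}
    (hu : UltrametricIneq u) (ℓ : α) : UltrametricIneq fun i j => ℓ + u i j :=
  fun i j k => (add_le_add_right (hu i j k) ℓ).trans_eq (add_max ℓ _ _)

theorem UltrametricIneq.max {u v : X → X → α} (hu : UltrametricIneq u)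
    (hv : UltrametricIneq v) : UltrametricIneq fun i j => max (u i j) (v i j) :=
  fun i j k => max_le
    ((hu i j k).trans (max_le_max (le_max_left _ _) (le_max_left _ _)))
    ((hv i j k).trans (max_le_max (le_max_right _ _) (le_max_right _ _)))

end UltrametricIneq

theorem stmt10_general {X : Type*} [DecidableEq X]
    (u v : X → X → ℝ)
    (hu : ∀ i j k, u i k ≤ max (u i j) (u j k))
    (hv : ∀ i j k, v i k ≤ max (v i j) (v j k))
    (ℓ : ℝ) :
    ∀ i j k : X, i ≠ j → j ≠ k → i ≠ k →
      (fun a b => if a = b then (0 : ℝ) else max (ℓ + u a b) (v a b)) i k ≤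
        max ((fun a b => if a = b then (0 : ℝ) else max (ℓ + u a b) (v a b)) i j)
            ((fun a b => if a = b then (0 : ℝ) else max (ℓ + u a b) (v a b)) j k) := by
  intro i j k hij hjk hik
  simp only [if_neg hij, if_neg hjk, if_neg hik]
  exact (UltrametricIneq.const_add hu ℓ).max hv i j k

/-- Tropical line segments between ultrametrics stay in ultrametric space. -/
theorem stmt10 {X : Type*} [Fintype X] [DecidableEq X]
    (u v : X → X → ℝ)
    (husymm : ∀ i j, u i j = u j i) (hudiag : ∀ i, u i i = 0)
    (hu : ∀ i j k, u i k ≤ max (u i j) (u j k))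
    (hvsymm : ∀ i j, v i j = v j i) (hvdiag : ∀ i, v i i = 0)
    (hv : ∀ i j k, v i k ≤ max (v i j) (v j k))
    (ℓ : ℝ) :
    ∀ i j k : X, i ≠ j → j ≠ k → i ≠ k →
      (fun a b => if a = b then (0 : ℝ) else max (ℓ + u a b) (v a b)) i k ≤
        max ((fun a b => if a = b then (0 : ℝ) else max (ℓ + u a b) (v a b)) i j)
            ((fun a b => if a = b then (0 : ℝ) else max (ℓ + u a b) (v a b)) j k) :=
  stmt10_general u v hu hv ℓ
end

section
/- The set of ultrametrics is tropically convex: if u⁽¹⁾, …, u⁽ᵏ⁾ : X × X → ℝ each satisfy the ultrametric inequality u(i,k) ≤ max(u(i,j), u(j,k)) and symmetry, and λ₁, …, λₖ ∈ ℝ, then w(i,j) := max over m of (λₘ + u⁽ᵐ⁾(i,j)) is symmetric and satisfies the ultrametric inequality. -/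
/-!
Each shifted function `λₘ + u⁽ᵐ⁾` still satisfies the ultrametric inequality, since adding a
constant commutes with `max`. Bounding the `m`-th term of the left-hand side by the `m`-th terms
on the right and those by the two maxima over all `m` gives the inequality for the pointwise
maximum; symmetry passes through termwise.
-/

theorem Finset.sup'_le_sup'_sup_sup' {α ι : Type*} [SemilatticeSup α] {s : Finset ι}
    (hs : s.Nonempty) {f g h : ι → α} (hle : ∀ i ∈ s, f i ≤ g i ⊔ h i) :
    s.sup' hs f ≤ s.sup' hs g ⊔ s.sup' hs h :=
  Finset.sup'_le hs f fun i hi =>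
    (hle i hi).trans (sup_le_sup (Finset.le_sup' g hi) (Finset.le_sup' h hi))

theorem add_le_max_add_of_le_max {α : Type*} [AddCommMonoid α] [LinearOrder α]
    [IsOrderedAddMonoid α] (c : α) {a b d : α} (h : a ≤ max b d) :
    c + a ≤ max (c + b) (c + d) :=
  (add_le_add_right h c).trans_eq (max_add_add_left c b d).symm

/-- The set of ultrametrics is tropically convex: a max-plus combination of
symmetric functions satisfying the ultrametric inequality is again symmetric and
satisfies the ultrametric inequality. -/
theorem stmt11 {X : Type*} {k : ℕ} [NeZero k]
    (u : Fin k → X → X → ℝ)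
    (hsymm : ∀ m i j, u m i j = u m j i)
    (hultra : ∀ m i j l, u m i l ≤ max (u m i j) (u m j l))
    (lam : Fin k → ℝ) :
    (∀ i j : X,
      Finset.univ.sup' Finset.univ_nonempty (fun m => lam m + u m i j) =
      Finset.univ.sup' Finset.univ_nonempty (fun m => lam m + u m j i)) ∧
    (∀ i j l : X,
      Finset.univ.sup' Finset.univ_nonempty (fun m => lam m + u m i l) ≤
        max (Finset.univ.sup' Finset.univ_nonempty (fun m => lam m + u m i j))
            (Finset.univ.sup' Finset.univ_nonempty (fun m => lam m + u m j l))) := by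
  refine ⟨fun i j => by simp only [hsymm], fun i j l => ?_⟩
  exact Finset.sup'_le_sup'_sup_sup' _ fun m _ =>
    add_le_max_add_of_le_max (lam m) (hultra m i j l)
end
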